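/- As formal power series with integer coefficients, ∑_{n≥0} b(n) q^n ≡ (q;q)_∞^{47} / ((q^2;q^2)_∞^2 (q^7;q^7)_∞^7) (mod 49), i.e., every coefficient of the difference of the two series is divisible by 49. -/

import Mathlib

/-- The formal power series `(q^d; q^d)_∞ = ∏_{m ≥ 1} (1 - q^{d·m})` over `ℤ`.
Its `n`-th coefficient is defined as the `n`-th coefficient of the finite truncated
product `∏_{m=1}^{n+1} (1 - q^{d·m})`; for `d ≥ 1` the omitted factors do not affect
the coefficient of `q^n`, so this is the usual infinite product. -/
noncomputable def pochE (d : ℕ) : PowerSeries ℤ :=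
  PowerSeries.mk fun n =>
    PowerSeries.coeff (R := ℤ) n
      (∏ m ∈ Finset.range (n + 1), (1 - (PowerSeries.X : PowerSeries ℤ) ^ (d * (m + 1))))

/-!
Modulo 7, `(1 - x)^7 ≡ 1 - x^7`, so `(q;q)_∞^7 ≡ (q^7;q^7)_∞`, and raising a congruence
mod `p` to the `p`-th power lifts it to one mod `p^2`: `(q;q)_∞^49 ≡ (q^7;q^7)_∞^7 (mod 49)`.
Hence `1/((q;q)_∞^2 (q^2;q^2)_∞^2) = (q;q)_∞^47/((q;q)_∞^49 (q^2;q^2)_∞^2)` is congruent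
to the right-hand side. The infinite products are handled through their truncations, which
agree with them modulo a power of `X`.
-/

open PowerSeries Finset

variable {R : Type*} [CommRing R]

theorem dvd_prod_sub_prod {ι : Type*} {c : R} {s : Finset ι} {f g : ι → R}
    (h : ∀ i ∈ s, c ∣ f i - g i) : c ∣ ∏ i ∈ s, f i - ∏ i ∈ s, g i := by
  simp_rw [← Ideal.mem_span_singleton, ← Ideal.Quotient.eq, map_prod] at h ⊢
  exact prod_congr rfl h

theorem prime_dvd_one_sub_pow_sub_one_sub_pow {p : ℕ} (hp : p.Prime) (x : R) :
    (p : R) ∣ (1 - x) ^ p - (1 - x ^ p) := by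
  obtain ⟨r, hr⟩ := exists_add_pow_prime_eq hp 1 (-x)
  rcases hp.eq_two_or_odd' with rfl | hodd
  · exact ⟨x ^ 2 - x, by ring⟩
  · exact ⟨-x * r, by rw [sub_eq_add_neg 1 x, hr, hodd.neg_pow]; ring⟩

namespace PowerSeries

theorem C_dvd_iff_dvd_coeff (c : R) (f : R⟦X⟧) : C c ∣ f ↔ ∀ n, c ∣ coeff n f := by
  constructor
  · rintro ⟨g, rfl⟩ n
    rw [coeff_C_mul]
    exact dvd_mul_right c _
  · intro h
    choose g hg using h
    exact ⟨mk g, ext fun n => by rw [coeff_C_mul, coeff_mk, ← hg]⟩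

theorem coeff_eq_of_X_pow_dvd_sub {m n : ℕ} {f g : R⟦X⟧} (h : X ^ m ∣ f - g) (hn : n < m) :
    coeff n f = coeff n g := by
  rw [← sub_eq_zero, ← map_sub]
  exact X_pow_dvd_iff.mp h n hn

end PowerSeries

variable (R) in
noncomputable def pochTrunc (d N : ℕ) : R⟦X⟧ :=
  ∏ m ∈ range N, (1 - X ^ (d * (m + 1)))

theorem X_pow_dvd_pochTrunc_sub {d k N : ℕ} (hd : 0 < d) (hkN : k ≤ N) :
    (X : R⟦X⟧) ^ (k + 1) ∣ pochTrunc R d N - pochTrunc R d k := by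
  have hfactor : ∀ m ∈ Ico k N, (X : R⟦X⟧) ^ (k + 1) ∣ (1 - X ^ (d * (m + 1))) - 1 := by
    intro m hm
    rw [sub_sub_cancel_left, dvd_neg]
    exact pow_dvd_pow X ((Nat.succ_le_succ (mem_Ico.mp hm).1).trans (Nat.le_mul_of_pos_left _ hd))
  have htail := dvd_prod_sub_prod hfactor
  rw [prod_const_one] at htail
  rw [pochTrunc, pochTrunc, ← prod_range_mul_prod_Ico _ hkN, ← mul_sub_one]
  exact htail.mul_left _

theorem coeff_pochE (d n : ℕ) : coeff n (pochE d) = coeff n (pochTrunc ℤ d (n + 1)) := by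
  rw [pochE, coeff_mk, pochTrunc]

theorem X_pow_dvd_pochE_sub_pochTrunc {d : ℕ} (hd : 0 < d) (N : ℕ) :
    (X : ℤ⟦X⟧) ^ N ∣ pochE d - pochTrunc ℤ d N := by
  refine X_pow_dvd_iff.mpr fun n hn => ?_
  rw [map_sub, sub_eq_zero, coeff_pochE]
  exact (coeff_eq_of_X_pow_dvd_sub (X_pow_dvd_pochTrunc_sub hd hn) (by omega)).symm

theorem constantCoeff_pochE {d : ℕ} (hd : 0 < d) : constantCoeff (pochE d) = 1 := by
  have := coeff_eq_of_X_pow_dvd_sub (X_pow_dvd_pochE_sub_pochTrunc hd 1) zero_lt_one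
  simpa [pochTrunc, coeff_X_pow, hd.ne'] using this

theorem prime_dvd_pochTrunc_pow_sub {p : ℕ} (hp : p.Prime) (d N : ℕ) :
    (p : R⟦X⟧) ∣ pochTrunc R d N ^ p - pochTrunc R (p * d) N := by
  rw [pochTrunc, pochTrunc, ← prod_pow]
  refine dvd_prod_sub_prod fun m _ => ?_
  have h := prime_dvd_one_sub_pow_sub_one_sub_pow hp ((X : R⟦X⟧) ^ (d * (m + 1)))
  rwa [← pow_mul, mul_comm (d * (m + 1)) p, ← mul_assoc] at h

theorem prime_dvd_pochE_pow_sub {p d : ℕ} (hp : p.Prime) (hd : 0 < d) :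
    (p : ℤ⟦X⟧) ∣ pochE d ^ p - pochE (p * d) := by
  rw [← map_natCast C, C_dvd_iff_dvd_coeff]
  intro n
  have htrunc : X ^ (n + 1) ∣ (pochE d ^ p - pochE (p * d))
      - (pochTrunc ℤ d (n + 1) ^ p - pochTrunc ℤ (p * d) (n + 1)) := by
    rw [sub_sub_sub_comm]
    exact dvd_sub ((X_pow_dvd_pochE_sub_pochTrunc hd _).trans (sub_dvd_pow_sub_pow _ _ p))
      (X_pow_dvd_pochE_sub_pochTrunc (Nat.mul_pos hp.pos hd) _)
  rw [coeff_eq_of_X_pow_dvd_sub htrunc n.lt_succ_self]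
  exact (C_dvd_iff_dvd_coeff _ _).mp
    (map_natCast (C (R := ℤ)) p ▸ prime_dvd_pochTrunc_pow_sub hp d _) n

/-- If `b` is the cubic partition pair function, i.e. the sequence whose generating
function is `∑ b(n) qⁿ = 1/((q;q)_∞² (q²;q²)_∞²)`, then as formal power series over ℤ,
`∑ b(n) qⁿ ≡ (q;q)_∞⁴⁷ / ((q²;q²)_∞² (q⁷;q⁷)_∞⁷) (mod 49)`: every coefficient of the
difference of the two series is divisible by 49.  (The divisor series has constant term
1, hence is invertible; its inverse is `PowerSeries.invOfUnit _ 1`.) -/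
theorem cubic_partition_pair_genfun_mod_49 (b : ℕ → ℤ)
    (hb : PowerSeries.mk b * ((pochE 1) ^ 2 * (pochE 2) ^ 2) = 1) :
    ∀ n : ℕ, (49 : ℤ) ∣
      PowerSeries.coeff (R := ℤ) n
        (PowerSeries.mk b -
          (pochE 1) ^ 47 * PowerSeries.invOfUnit ((pochE 2) ^ 2 * (pochE 7) ^ 7) 1) := by
  set I := invOfUnit ((pochE 2) ^ 2 * (pochE 7) ^ 7) 1
  have hI : (pochE 2) ^ 2 * (pochE 7) ^ 7 * I = 1 :=
    mul_invOfUnit _ _ (by simp [constantCoeff_pochE])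
  have h49 : (49 : ℤ⟦X⟧) ∣ pochE 7 ^ 7 - pochE 1 ^ 49 := by
    have := dvd_sub_pow_of_dvd_sub (prime_dvd_pochE_pow_sub Nat.prime_seven one_pos) 1
    rw [dvd_sub_comm]
    norm_num [← pow_mul] at this
    exact this
  have hdiff : mk b - pochE 1 ^ 47 * I
      = (pochE 7 ^ 7 - pochE 1 ^ 49) * (mk b * pochE 2 ^ 2 * I) := by
    linear_combination (pochE 1 ^ 47 * I) * hb - mk b * hI
  rw [hdiff]
  exact (C_dvd_iff_dvd_coeff 49 _).mp (map_ofNat (C (R := ℤ)) 49 ▸ h49.mul_right _)
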